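/- Let V = { (x₁,x₂,x₃,x₄,x₅,x,y) ∈ ℝ⁷ : x₄ ≠ 0 and x₅ ≠ 0 }. The map h₂(x₁,x₂,x₃,x₄,x₅,x,y) = (x₁, x₂ − x₄·ln|x₄|, x₃, x₄, x₅, x, y) restricts to a homeomorphism of V onto itself, and for every c ∈ ℝ and every pair of signs ε, δ ∈ {+1,−1}, h₂ maps the set { v ∈ V : x₂/x₄ − x₃/x₅ = c, εx₄ > 0, δx₅ > 0 } bijectively onto the set { v ∈ V : x₂/x₄ − x₃/x₅ + ln|x₄| = c, εx₄ > 0, δx₅ > 0 }. (Hence h₂ is a topological equivalence between the foliation of V by the leaves of the first family and the foliation of V by the leaves of the second family.) -/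
import Mathlib


noncomputable section

/-- The foliated manifold `V = {x₄ ≠ 0, x₅ ≠ 0} ⊆ ℝ⁷` (coordinates
`(x₁,…,x₅,x,y)` indexed by `0,…,6`). -/
def V : Set (Fin 7 → ℝ) := {v | v 3 ≠ 0 ∧ v 4 ≠ 0}

/-- The map `h₂(x₁,x₂,x₃,x₄,x₅,x,y) = (x₁, x₂ − x₄·ln|x₄|, x₃, x₄, x₅, x, y)`. -/
def h2 (v : Fin 7 → ℝ) : Fin 7 → ℝ :=
  ![v 0, v 1 - v 3 * Real.log |v 3|, v 2, v 3, v 4, v 5, v 6]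


def g2 (v : Fin 7 → ℝ) : Fin 7 → ℝ :=
  ![v 0, v 1 + v 3 * Real.log |v 3|, v 2, v 3, v 4, v 5, v 6]

lemma g2_h2 (v : Fin 7 → ℝ) : g2 (h2 v) = v := by
  funext i; fin_cases i <;> first | rfl | (show v 1 - v 3 * Real.log |v 3| + v 3 * Real.log |v 3| = v 1; ring)

lemma h2_g2 (v : Fin 7 → ℝ) : h2 (g2 v) = v := by
  funext i; fin_cases i <;> first | rfl | (show v 1 + v 3 * Real.log |v 3| - v 3 * Real.log |v 3| = v 1; ring)

lemma h2_one (v : Fin 7 → ℝ) : h2 v 1 = v 1 - v 3 * Real.log |v 3| := rfl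
lemma h2_two (v : Fin 7 → ℝ) : h2 v 2 = v 2 := rfl
lemma h2_three (v : Fin 7 → ℝ) : h2 v 3 = v 3 := rfl
lemma h2_four (v : Fin 7 → ℝ) : h2 v 4 = v 4 := rfl

lemma h2_memV {v : Fin 7 → ℝ} (hv : v ∈ V) : h2 v ∈ V := ⟨hv.1, hv.2⟩
lemma g2_memV {v : Fin 7 → ℝ} (hv : v ∈ V) : g2 v ∈ V := ⟨hv.1, hv.2⟩

lemma cont_piece : Continuous fun v : V => (v : Fin 7 → ℝ) 3 * Real.log |(v : Fin 7 → ℝ) 3| := by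
  rw [continuous_iff_continuousAt]
  intro v
  have h3 : ContinuousAt (fun v : V => (v : Fin 7 → ℝ) 3) v :=
    ((continuous_apply 3).comp continuous_subtype_val).continuousAt
  exact h3.mul (h3.abs.log (abs_ne_zero.mpr v.2.1))

lemma cont_h2V : Continuous fun v : V => h2 (v : Fin 7 → ℝ) := by
  refine continuous_pi fun i => ?_
  fin_cases i
  · show Continuous fun v : V => (v : Fin 7 → ℝ) 0
    exact (continuous_apply (0 : Fin 7)).comp continuous_subtype_val
  · show Continuous fun v : V => (v : Fin 7 → ℝ) 1 - (v : Fin 7 → ℝ) 3 * Real.log |(v : Fin 7 → ℝ) 3|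
    exact ((continuous_apply (1 : Fin 7)).comp continuous_subtype_val).sub cont_piece
  · show Continuous fun v : V => (v : Fin 7 → ℝ) 2
    exact (continuous_apply (2 : Fin 7)).comp continuous_subtype_val
  · show Continuous fun v : V => (v : Fin 7 → ℝ) 3
    exact (continuous_apply (3 : Fin 7)).comp continuous_subtype_val
  · show Continuous fun v : V => (v : Fin 7 → ℝ) 4
    exact (continuous_apply (4 : Fin 7)).comp continuous_subtype_val
  · show Continuous fun v : V => (v : Fin 7 → ℝ) 5
    exact (continuous_apply (5 : Fin 7)).comp continuous_subtype_val
  · show Continuous fun v : V => (v : Fin 7 → ℝ) 6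
    exact (continuous_apply (6 : Fin 7)).comp continuous_subtype_val

lemma cont_g2V : Continuous fun v : V => g2 (v : Fin 7 → ℝ) := by
  refine continuous_pi fun i => ?_
  fin_cases i
  · show Continuous fun v : V => (v : Fin 7 → ℝ) 0
    exact (continuous_apply (0 : Fin 7)).comp continuous_subtype_val
  · show Continuous fun v : V => (v : Fin 7 → ℝ) 1 + (v : Fin 7 → ℝ) 3 * Real.log |(v : Fin 7 → ℝ) 3|
    exact ((continuous_apply (1 : Fin 7)).comp continuous_subtype_val).add cont_piece
  · show Continuous fun v : V => (v : Fin 7 → ℝ) 2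
    exact (continuous_apply (2 : Fin 7)).comp continuous_subtype_val
  · show Continuous fun v : V => (v : Fin 7 → ℝ) 3
    exact (continuous_apply (3 : Fin 7)).comp continuous_subtype_val
  · show Continuous fun v : V => (v : Fin 7 → ℝ) 4
    exact (continuous_apply (4 : Fin 7)).comp continuous_subtype_val
  · show Continuous fun v : V => (v : Fin 7 → ℝ) 5
    exact (continuous_apply (5 : Fin 7)).comp continuous_subtype_val
  · show Continuous fun v : V => (v : Fin 7 → ℝ) 6
    exact (continuous_apply (6 : Fin 7)).comp continuous_subtype_val

def Hhomeo : V ≃ₜ V where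
  toFun v := ⟨h2 v, h2_memV v.2⟩
  invFun v := ⟨g2 v, g2_memV v.2⟩
  left_inv v := Subtype.ext (g2_h2 v)
  right_inv v := Subtype.ext (h2_g2 v)
  continuous_toFun := cont_h2V.subtype_mk _
  continuous_invFun := cont_g2V.subtype_mk _

/-- `h₂` restricts to a homeomorphism of `V` onto itself, and it maps each leaf
`{x₂/x₄ − x₃/x₅ = c, εx₄ > 0, δx₅ > 0}` of the G₃-foliation bijectively onto the
leaf `{x₂/x₄ − x₃/x₅ + ln|x₄| = c, εx₄ > 0, δx₅ > 0}` of the G₉-foliation. -/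
theorem h2_topological_equivalence :
    (∃ H : V ≃ₜ V, ∀ v : V, (H v : Fin 7 → ℝ) = h2 v) ∧
    ∀ (c ε δ : ℝ), (ε = 1 ∨ ε = -1) → (δ = 1 ∨ δ = -1) →
      Set.BijOn h2
        {v ∈ V | v 1 / v 3 - v 2 / v 4 = c ∧ ε * v 3 > 0 ∧ δ * v 4 > 0}
        {v ∈ V | v 1 / v 3 - v 2 / v 4 + Real.log |v 3| = c ∧
          ε * v 3 > 0 ∧ δ * v 4 > 0} := by
  constructor
  · exact ⟨Hhomeo, fun v => rfl⟩
  · intro c ε δ _ _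
    have hinj : Function.Injective h2 := Function.LeftInverse.injective g2_h2
    refine ⟨?_, hinj.injOn, ?_⟩
    · rintro v ⟨hv, heq, he, hd⟩
      refine ⟨h2_memV hv, ?_, ?_, ?_⟩
      · rw [h2_one, h2_two, h2_three, h2_four]
        have h3 : v 3 ≠ 0 := hv.1
        have h4 : v 4 ≠ 0 := hv.2
        field_simp
        field_simp at heq
        linarith [heq]
      · rw [h2_three]; exact he
      · rw [h2_four]; exact hd
    · rintro w ⟨hw, heq, he, hd⟩
      refine ⟨g2 w, ⟨g2_memV hw, ?_, ?_, ?_⟩, h2_g2 w⟩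
      · have h3 : w 3 ≠ 0 := hw.1
        have h4 : w 4 ≠ 0 := hw.2
        show (w 1 + w 3 * Real.log |w 3|) / w 3 - w 2 / w 4 = c
        field_simp
        field_simp at heq
        linarith [heq]
      · show ε * w 3 > 0; exact he
      · show δ * w 4 > 0; exact hd

end
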